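/- arXiv:2407.14837 — 2 statements merged into one kernel-verified Lean document; each statement's English description precedes it below -/
import Mathlib

section
/- Let E be a homogeneous Moran set determined by a collection of closed intervals fulfilling the homogeneous Moran structure for the sequences {n_k} and {c_k}, and suppose M = sup_{k≥1} n_k < +∞. Then for every x ∈ E and all integers k ≥ 1 and l ≥ 1, N_{δ_{k+l}}(B(x,δ_k) ∩ E) ≥ (1/(4M))·n_{k+1}n_{k+2}⋯n_{k+l}. -/
open Metric Filter Set
open scoped ENNReal

/-- `coveringNumber r A` is the smallest number of balls of radius `r`
needed to cover `A` (as an extended nonnegative real, `⊤` if no finite cover exists). -/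
noncomputable def coveringNumber {X : Type*} [MetricSpace X] (r : ℝ) (A : Set X) : ℝ≥0∞ :=
  sInf {m : ℝ≥0∞ | ∃ S : Finset X, (S.card : ℝ≥0∞) = m ∧ A ⊆ ⋃ y ∈ S, Metric.ball y r}

/-- A word `σ = σ₁σ₂⋯σₖ ∈ Ωₖ`: its `j`-th letter (0-indexed `j`) satisfies
`1 ≤ σⱼ₊₁ ≤ n (j+1)`. -/
def MoranWord (n : ℕ → ℕ) (σ : List ℕ) : Prop :=
  ∀ j, j < σ.length → 1 ≤ σ.getD j 0 ∧ σ.getD j 0 ≤ n (j + 1)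

/-- A collection of closed intervals of `[0,1]` fulfilling the homogeneous Moran
structure for the sequences `{nₖ}` and `{cₖ}`. -/
structure HomMoranStructure (n : ℕ → ℕ) (c : ℕ → ℝ) where
  I : List ℕ → Set ℝ
  root : I [] = Set.Icc 0 1
  isClosedInterval : ∀ σ, MoranWord n σ → ∃ x y : ℝ, x ≤ y ∧ I σ = Set.Icc x y
  subset : ∀ σ, MoranWord n σ → ∀ i, 1 ≤ i → i ≤ n (σ.length + 1) → I (σ ++ [i]) ⊆ I σ
  disj : ∀ σ, MoranWord n σ → ∀ i₁ i₂, 1 ≤ i₁ → i₁ < i₂ → i₂ ≤ n (σ.length + 1) →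
    interior (I (σ ++ [i₁])) ∩ interior (I (σ ++ [i₂])) = ∅
  ratio : ∀ σ, MoranWord n σ → ∀ i, 1 ≤ i → i ≤ n (σ.length + 1) →
    Metric.diam (I (σ ++ [i])) = c (σ.length + 1) * Metric.diam (I σ)

/-- The homogeneous Moran set `E = ⋂_{k≥1} ⋃_{σ∈Ωₖ} I_σ` determined by a
homogeneous Moran structure. -/
def moranSet {n : ℕ → ℕ} {c : ℕ → ℝ} (S : HomMoranStructure n c) : Set ℝ :=
  ⋂ k : ℕ, ⋃ σ : List ℕ, ⋃ _ : MoranWord n σ ∧ σ.length = k + 1, S.I σ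

/-- `moranDelta c k = c₁c₂⋯cₖ`, with `moranDelta c 0 = 1`. -/
noncomputable def moranDelta (c : ℕ → ℝ) (k : ℕ) : ℝ :=
  ∏ i ∈ Finset.Icc 1 k, c i

set_option linter.unusedVariables false

lemma mw_append {n : ℕ → ℕ} {σ : List ℕ} {i : ℕ} (h : MoranWord n σ)
    (h1 : 1 ≤ i) (h2 : i ≤ n (σ.length + 1)) : MoranWord n (σ ++ [i]) := by
  intro j hj
  simp only [List.length_append, List.length_singleton] at hj
  rcases lt_or_eq_of_le (Nat.lt_succ_iff.mp hj) with hlt | heq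
  · rw [List.getD_append _ _ _ _ hlt]; exact h j hlt
  · subst heq
    have : (σ ++ [i]).getD σ.length 0 = i := by
      rw [List.getD_eq_getElem _ _ (by simp)]
      simp
    rw [this]; exact ⟨h1, h2⟩

lemma mw_of_append {n : ℕ → ℕ} {σ : List ℕ} {i : ℕ} (h : MoranWord n (σ ++ [i])) :
    MoranWord n σ ∧ 1 ≤ i ∧ i ≤ n (σ.length + 1) := by
  have hlen : (σ ++ [i]).length = σ.length + 1 := by simp
  constructor
  · intro j hj
    have := h j (by rw [hlen]; omega)
    rwa [List.getD_append _ _ _ _ hj] at this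
  · have := h σ.length (by omega)
    have hg : (σ ++ [i]).getD σ.length 0 = i := by
      rw [List.getD_eq_getElem _ _ (by rw [hlen]; omega)]
      simp
    rwa [hg] at this

lemma mw_take {n : ℕ → ℕ} {σ : List ℕ} (h : MoranWord n σ) (m : ℕ) :
    MoranWord n (σ.take m) := by
  intro j hj
  have hj' : j < σ.length := by simp [List.length_take] at hj; omega
  have : (σ.take m).getD j 0 = σ.getD j 0 := by
    rw [List.getD_eq_getElem _ _ hj, List.getD_eq_getElem _ _ hj']
    simp [List.getElem_take]
  rw [this]; exact h j hj'

variable {n : ℕ → ℕ} {c : ℕ → ℝ} (S : HomMoranStructure n c)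

lemma moranDelta_zero : moranDelta c 0 = 1 := by simp [moranDelta]

lemma moranDelta_succ (k : ℕ) : moranDelta c (k + 1) = moranDelta c k * c (k + 1) := by
  simp [moranDelta, Finset.prod_Icc_succ_top (Nat.le_add_left 1 k)]

lemma moranDelta_pos (hc : ∀ k, 1 ≤ k → 0 < c k) (k : ℕ) : 0 < moranDelta c k := by
  apply Finset.prod_pos
  intro i hi
  exact hc i (Finset.mem_Icc.mp hi).1

lemma diam_I {σ : List ℕ} (h : MoranWord n σ) :
    Metric.diam (S.I σ) = moranDelta c σ.length := by
  induction σ using List.reverseRecOn with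
  | nil => simp [S.root, Real.diam_Icc (by norm_num : (0:ℝ) ≤ 1), moranDelta_zero]
  | append_singleton σ i ih =>
    obtain ⟨hσ, h1, h2⟩ := mw_of_append h
    rw [S.ratio σ hσ i h1 h2, ih hσ]
    simp [moranDelta_succ, mul_comm]

lemma I_append_subset (ρ : List ℕ) : ∀ σ : List ℕ, MoranWord n (σ ++ ρ) → S.I (σ ++ ρ) ⊆ S.I σ := by
  induction ρ using List.reverseRecOn with
  | nil => intro σ h; simp
  | append_singleton ρ a ih =>
    intro σ h
    rw [← List.append_assoc] at h ⊢
    obtain ⟨hσρ, h1, h2⟩ := mw_of_append h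
    exact (S.subset _ hσρ a h1 h2).trans (ih σ hσρ)

lemma I_take_subset {σ : List ℕ} (h : MoranWord n σ) (m : ℕ) :
    S.I σ ⊆ S.I (σ.take m) := by
  have := I_append_subset S (σ.drop m) (σ.take m) (by rw [List.take_append_drop]; exact h)
  rwa [List.take_append_drop] at this

lemma I_nonempty {σ : List ℕ} (h : MoranWord n σ) : (S.I σ).Nonempty := by
  obtain ⟨a, b, hab, hI⟩ := S.isClosedInterval σ h
  rw [hI]; exact ⟨a, le_refl a, hab⟩

lemma I_closed {σ : List ℕ} (h : MoranWord n σ) : IsClosed (S.I σ) := by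
  obtain ⟨a, b, hab, hI⟩ := S.isClosedInterval σ h
  rw [hI]; exact isClosed_Icc

lemma I_compact {σ : List ℕ} (h : MoranWord n σ) : IsCompact (S.I σ) := by
  obtain ⟨a, b, hab, hI⟩ := S.isClosedInterval σ h
  rw [hI]; exact isCompact_Icc

lemma mw_replicate (hn : ∀ k, 1 ≤ k → 2 ≤ n k) {σ : List ℕ} (h : MoranWord n σ) (m : ℕ) :
    MoranWord n (σ ++ List.replicate m 1) := by
  induction m with
  | zero => simpa using h
  | succ m ih =>
    have : σ ++ List.replicate (m + 1) 1 = (σ ++ List.replicate m 1) ++ [1] := by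
      simp [List.replicate_succ']
    rw [this]
    exact mw_append ih le_rfl (le_trans (by norm_num) (hn _ (by omega)))

/-- Each basic interval contains a point of the Moran set. -/
lemma exists_mem_moranSet (hn : ∀ k, 1 ≤ k → 2 ≤ n k) {σ : List ℕ}
    (h : MoranWord n σ) (hσ : 1 ≤ σ.length) : ∃ z ∈ moranSet S, z ∈ S.I σ := by
  set t : ℕ → Set ℝ := fun m => S.I (σ ++ List.replicate m 1) with ht
  have hmw : ∀ m, MoranWord n (σ ++ List.replicate m 1) := mw_replicate hn h
  have hsub : ∀ m, t (m + 1) ⊆ t m := by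
    intro m
    have heq : σ ++ List.replicate (m + 1) 1 = (σ ++ List.replicate m 1) ++ [1] := by
      simp [List.replicate_succ']
    simp only [ht, heq]
    exact S.subset _ (hmw m) 1 le_rfl (le_trans (by norm_num) (hn _ (by omega)))
  have hne : (⋂ m, t m).Nonempty := by
    apply IsCompact.nonempty_iInter_of_sequence_nonempty_isCompact_isClosed t hsub
    · intro m; exact I_nonempty S (hmw m)
    · exact I_compact S (hmw 0)
    · intro m; exact I_closed S (hmw m)
  obtain ⟨z, hz⟩ := hne
  simp only [Set.mem_iInter] at hz
  refine ⟨z, ?_, by have := hz 0; simpa [ht] using this⟩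
  rw [moranSet]
  simp only [Set.mem_iInter, Set.mem_iUnion]
  intro j
  by_cases hj : j + 1 ≤ σ.length
  · refine ⟨σ.take (j + 1), ⟨mw_take h _, by simp [List.length_take]; omega⟩, ?_⟩
    exact I_take_subset S h (j + 1) (by have := hz 0; simpa [ht] using this)
  · refine ⟨σ ++ List.replicate (j + 1 - σ.length) 1, ⟨hmw _, by simp; omega⟩, hz _⟩

/-- Distinct words of the same length have disjoint interiors. -/
lemma interior_disjoint : ∀ τ : List ℕ, MoranWord n τ → ∀ τ' : List ℕ, MoranWord n τ' →
    τ'.length = τ.length → τ ≠ τ' → interior (S.I τ) ∩ interior (S.I τ') = ∅ := by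
  intro τ
  induction τ using List.reverseRecOn with
  | nil =>
    intro _ τ' _ hlen hne
    exact absurd (List.eq_nil_of_length_eq_zero hlen).symm hne
  | append_singleton σ i ih =>
    intro hmw τ' hmw' hlen hne
    have hτ'ne : τ' ≠ [] := by
      intro hnil; rw [hnil] at hlen; simp at hlen
    obtain ⟨σ', i', rfl⟩ : ∃ σ'' i'', τ' = σ'' ++ [i''] :=
      ⟨τ'.dropLast, τ'.getLast hτ'ne, (List.dropLast_append_getLast hτ'ne).symm⟩
    obtain ⟨hσ, h1, h2⟩ := mw_of_append hmw
    obtain ⟨hσ', h1', h2'⟩ := mw_of_append hmw'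
    have hlen' : σ'.length = σ.length := by simp at hlen; omega
    by_cases hss : σ = σ'
    · subst hss
      have hii : i ≠ i' := fun hii => hne (by rw [hii])
      rcases lt_or_gt_of_ne hii with hlt | hgt
      · exact S.disj σ hσ i i' h1 hlt h2'
      · rw [Set.inter_comm]; exact S.disj σ hσ i' i h1' hgt h2
    · have hd := ih hσ σ' hσ' hlen' hss
      have m1 : interior (S.I (σ ++ [i])) ⊆ interior (S.I σ) :=
        interior_mono (S.subset σ hσ i h1 h2)
      have m2 : interior (S.I (σ' ++ [i'])) ⊆ interior (S.I σ') :=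
        interior_mono (S.subset σ' hσ' i' h1' h2')
      apply Set.eq_empty_of_subset_empty
      rw [← hd]
      exact Set.inter_subset_inter m1 m2

/-- The finset of words extending `w` by `m` letters. -/
def extW (n : ℕ → ℕ) (w : List ℕ) : ℕ → Finset (List ℕ)
  | 0 => {w}
  | m + 1 => (extW n w m).biUnion fun u =>
      (Finset.Icc 1 (n (u.length + 1))).image fun i => u ++ [i]

lemma extW_length {w : List ℕ} {m : ℕ} {u : List ℕ} (hu : u ∈ extW n w m) :
    u.length = w.length + m := by
  induction m generalizing u with
  | zero => simp [extW] at hu; simp [hu]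
  | succ m ih =>
    simp only [extW, Finset.mem_biUnion, Finset.mem_image] at hu
    obtain ⟨v, hv, i, _, rfl⟩ := hu
    simp [ih hv]; omega

lemma extW_prefix {w : List ℕ} {m : ℕ} {u : List ℕ} (hu : u ∈ extW n w m) :
    ∃ ρ, u = w ++ ρ := by
  induction m generalizing u with
  | zero => simp [extW] at hu; exact ⟨[], by simp [hu]⟩
  | succ m ih =>
    simp only [extW, Finset.mem_biUnion, Finset.mem_image] at hu
    obtain ⟨v, hv, i, _, rfl⟩ := hu
    obtain ⟨ρ, rfl⟩ := ih hv
    exact ⟨ρ ++ [i], by simp⟩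

lemma extW_mw {w : List ℕ} (hw : MoranWord n w) {m : ℕ} {u : List ℕ}
    (hu : u ∈ extW n w m) : MoranWord n u := by
  induction m generalizing u with
  | zero => simp [extW] at hu; simpa [hu] using hw
  | succ m ih =>
    simp only [extW, Finset.mem_biUnion, Finset.mem_image] at hu
    obtain ⟨v, hv, i, hi, rfl⟩ := hu
    simp only [Finset.mem_Icc] at hi
    exact mw_append (ih hv) hi.1 hi.2

lemma extW_card (w : List ℕ) (m : ℕ) :
    (extW n w m).card = ∏ i ∈ Finset.Icc (w.length + 1) (w.length + m), n i := by
  induction m with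
  | zero => simp [extW]
  | succ m ih =>
    rw [extW, Finset.card_biUnion, ← Nat.add_assoc,
      Finset.prod_Icc_succ_top (by omega), ← ih]
    · have hcongr : ∀ u ∈ extW n w m,
          ((Finset.Icc 1 (n (u.length + 1))).image fun i => u ++ [i]).card
            = n (w.length + m + 1) := by
        intro u hu
        rw [Finset.card_image_of_injective _ (fun a b hab => by simpa using hab),
          Nat.card_Icc, extW_length hu]
        omega
      rw [Finset.sum_congr rfl hcongr, Finset.sum_const, smul_eq_mul, mul_comm]
    · intro u hu v hv huv
      simp only [Finset.disjoint_left, Finset.mem_image]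
      rintro _ ⟨i, hi, rfl⟩ ⟨j, hj, hij⟩
      have hlen : u.length = v.length := by rw [extW_length hu, extW_length hv]
      exact huv (List.append_inj' hij (by simp)).1.symm


/-- For a homogeneous Moran set `E` with `M = sup_{k≥1} n_k < ∞`: for every `x ∈ E` and
`k, l ≥ 1`, `N_{δ_{k+l}}(B(x,δ_k) ∩ E) ≥ (1/(4M))·n_{k+1}⋯n_{k+l}`. -/
theorem homMoran_coveringNumber_lower (n : ℕ → ℕ) (c : ℕ → ℝ)
    (hn : ∀ k, 1 ≤ k → 2 ≤ n k) (hc : ∀ k, 1 ≤ k → 0 < c k)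
    (hnc : ∀ k, 1 ≤ k → (n k : ℝ) * c k < 1)
    (S : HomMoranStructure n c) (E : Set ℝ) (hE : E = moranSet S)
    (M : ℕ) (hbd : ∀ k, 1 ≤ k → n k ≤ M)
    (hM : M = sSup {m : ℕ | ∃ k, 1 ≤ k ∧ n k = m}) :
    ∀ x ∈ E, ∀ k l : ℕ, 1 ≤ k → 1 ≤ l →
      ENNReal.ofReal ((1 / (4 * (M : ℝ))) * ∏ i ∈ Finset.Icc (k + 1) (k + l), (n i : ℝ)) ≤
        coveringNumber (moranDelta c (k + l)) (Metric.ball x (moranDelta c k) ∩ E) := by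
  intro x hx k l hk hl
  have hδk : 0 < moranDelta c k := moranDelta_pos hc k
  set δ : ℝ := moranDelta c (k + l) with hδdef
  have hδ : 0 < δ := moranDelta_pos hc (k + l)
  -- the word of length k+1 containing x
  have hxE : x ∈ moranSet S := hE ▸ hx
  simp only [moranSet, Set.mem_iInter, Set.mem_iUnion] at hxE
  obtain ⟨σ', ⟨hmwσ', hlenσ'⟩, hxσ'⟩ := hxE k
  -- δ_{k+1} < δ_k
  have hn2 : (2 : ℝ) ≤ (n (k+1) : ℝ) := by exact_mod_cast hn (k+1) (by omega)
  have hck1 : c (k + 1) < 1 := by nlinarith [hc (k+1) (by omega), hnc (k+1) (by omega)]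
  have hlt : moranDelta c (k + 1) < moranDelta c k := by
    rw [moranDelta_succ]; nlinarith [hc (k+1) (by omega)]
  -- I σ' ⊆ ball x δ_k
  have hIball : S.I σ' ⊆ Metric.ball x (moranDelta c k) := by
    intro z hz
    obtain ⟨a, b, hab, hIcc⟩ := S.isClosedInterval σ' hmwσ'
    have hbdd : Bornology.IsBounded (S.I σ') := hIcc ▸ isBounded_Icc a b
    have hd : dist z x ≤ Metric.diam (S.I σ') := dist_le_diam_of_mem hbdd hz hxσ'
    rw [diam_I S hmwσ', hlenσ'] at hd
    exact Metric.mem_ball.mpr (lt_of_le_of_lt hd hlt)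
  -- the extension words
  set W : Finset (List ℕ) := extW n σ' (l - 1) with hWdef
  have hWlen : ∀ u ∈ W, u.length = k + l := by
    intro u hu; rw [extW_length hu, hlenσ']; omega
  have hWmw : ∀ u ∈ W, MoranWord n u := fun u hu => extW_mw hmwσ' hu
  have hWdiam : ∀ u ∈ W, Metric.diam (S.I u) = δ := by
    intro u hu; rw [diam_I S (hWmw u hu), hWlen u hu]
  have hWsub : ∀ u ∈ W, S.I u ⊆ S.I σ' := by
    intro u hu
    obtain ⟨ρ, rfl⟩ := extW_prefix hu
    exact I_append_subset S ρ σ' (hWmw _ hu)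
  -- choose points of E in each interval
  have hpex : ∀ u : List ℕ, ∃ z : ℝ, u ∈ W → z ∈ moranSet S ∧ z ∈ S.I u := by
    intro u
    by_cases h : u ∈ W
    · obtain ⟨z, hz1, hz2⟩ := exists_mem_moranSet S hn (hWmw u h)
        (by rw [hWlen u h]; omega)
      exact ⟨z, fun _ => ⟨hz1, hz2⟩⟩
    · exact ⟨0, fun h' => absurd h' h⟩
  choose p hp using hpex
  -- left endpoints
  have haex : ∀ u : List ℕ, ∃ a : ℝ, u ∈ W → S.I u = Set.Icc a (a + δ) := by
    intro u
    by_cases h : u ∈ W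
    · obtain ⟨a, b, hab, hIcc⟩ := S.isClosedInterval u (hWmw u h)
      refine ⟨a, fun _ => ?_⟩
      have hba : b - a = δ := by
        rw [← Real.diam_Icc hab, ← hIcc, hWdiam u h]
      rw [hIcc, show b = a + δ by linarith]
    · exact ⟨0, fun h' => absurd h' h⟩
  choose a ha using haex
  -- separation of left endpoints
  have hsep : ∀ u ∈ W, ∀ v ∈ W, u ≠ v → δ ≤ |a u - a v| := by
    intro u hu v hv huv
    by_contra habs
    push_neg at habs
    have hdisj := interior_disjoint S u (hWmw u hu) v (hWmw v hv)
      (by rw [hWlen u hu, hWlen v hv]) huv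
    rw [ha u hu, ha v hv, interior_Icc, interior_Icc] at hdisj
    rw [abs_sub_lt_iff] at habs
    set t : ℝ := (max (a u) (a v) + min (a u + δ) (a v + δ)) / 2 with htdef
    have h1 : max (a u) (a v) < min (a u + δ) (a v + δ) := by
      simp only [lt_min_iff, max_lt_iff]
      constructor <;> constructor <;> linarith [le_max_left (a u) (a v)]
    have ht1 : max (a u) (a v) < t := by rw [htdef]; linarith
    have ht2 : t < min (a u + δ) (a v + δ) := by rw [htdef]; linarith
    have : t ∈ Set.Ioo (a u) (a u + δ) ∩ Set.Ioo (a v) (a v + δ) := by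
      constructor <;> constructor
      · exact lt_of_le_of_lt (le_max_left _ _) ht1
      · exact lt_of_lt_of_le ht2 (min_le_left _ _)
      · exact lt_of_le_of_lt (le_max_right _ _) ht1
      · exact lt_of_lt_of_le ht2 (min_le_right _ _)
    rw [hdisj] at this
    exact this
  -- cardinality of W
  have hWcard : W.card = ∏ i ∈ Finset.Icc (k + 2) (k + l), n i := by
    rw [hWdef, extW_card, hlenσ']
    have h2 : k + 1 + (l - 1) = k + l := by omega
    rw [h2]
  -- main covering bound
  rw [_root_.coveringNumber]
  apply le_sInf
  rintro m ⟨T, hTcard, hTcov⟩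
  rw [← hTcard]
  -- choose centers
  have hgex : ∀ u : List ℕ, ∃ y : ℝ, u ∈ W → y ∈ T ∧ p u ∈ Metric.ball y δ := by
    intro u
    by_cases h : u ∈ W
    · have hpu : p u ∈ Metric.ball x (moranDelta c k) ∩ E := by
        refine ⟨hIball (hWsub u h ((hp u h).2)), hE ▸ (hp u h).1⟩
      have := hTcov hpu
      simp only [Set.mem_iUnion, exists_prop] at this
      obtain ⟨y, hy, hby⟩ := this
      exact ⟨y, fun _ => ⟨hy, hby⟩⟩
    · exact ⟨0, fun h' => absurd h' h⟩
  choose g hg using hgex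
  have key : W.card ≤ 4 * T.card := by
    apply Finset.card_le_mul_card_image_of_maps_to (fun u hu => (hg u hu).1)
    intro y hy
    have hbound : (W.filter (fun u => g u = y)).card ≤ (Finset.Icc (0 : ℤ) 3).card := by
      apply Finset.card_le_card_of_injOn (fun u => ⌊(a u - (y - 2 * δ)) / δ⌋)
      · intro u hu
        simp only [Finset.mem_coe, Finset.mem_filter] at hu
        obtain ⟨huW, hgu⟩ := hu
        have hpb : p u ∈ Metric.ball y δ := hgu ▸ (hg u huW).2
        rw [Metric.mem_ball, Real.dist_eq, abs_sub_lt_iff] at hpb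
        have hpI : p u ∈ Set.Icc (a u) (a u + δ) := (ha u huW) ▸ (hp u huW).2
        obtain ⟨hp1, hp2⟩ := hpI
        have h0 : 0 ≤ (a u - (y - 2 * δ)) / δ := by
          apply div_nonneg _ hδ.le; linarith
        have h3 : (a u - (y - 2 * δ)) / δ < 3 := by
          rw [div_lt_iff₀ hδ]; linarith
        simp only [Finset.mem_coe, Finset.mem_Icc]
        constructor
        · exact Int.floor_nonneg.mpr h0
        · have h3' : ⌊(a u - (y - 2 * δ)) / δ⌋ < 3 := by
            rw [Int.floor_lt]; exact_mod_cast h3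
          omega
      · intro u hu v hv huv
        simp only [Finset.coe_filter, Set.mem_setOf_eq] at hu hv
        by_contra hne
        have hsep' := hsep u hu.1 v hv.1 hne
        have hfl := Int.abs_sub_lt_one_of_floor_eq_floor huv
        have : |a u - a v| < δ := by
          have heq : (a u - (y - 2 * δ)) / δ - (a v - (y - 2 * δ)) / δ
              = (a u - a v) / δ := by ring
          rw [heq, abs_div, abs_of_pos hδ, div_lt_one hδ] at hfl
          exact hfl
        linarith
    simpa using hbound
  -- arithmetic conclusion
  have hM2 : (2 : ℝ) ≤ (M : ℝ) := by
    have := le_trans (hn 1 le_rfl) (hbd 1 le_rfl)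
    exact_mod_cast this
  have hsplit : ∏ i ∈ Finset.Icc (k + 1) (k + l), (n i : ℝ)
      = (n (k + 1) : ℝ) * ∏ i ∈ Finset.Icc (k + 2) (k + l), (n i : ℝ) := by
    have hins : Finset.Icc (k + 1) (k + l) = insert (k + 1) (Finset.Icc (k + 2) (k + l)) := by
      ext i; simp only [Finset.mem_Icc, Finset.mem_insert]; omega
    rw [hins, Finset.prod_insert (by simp)]
  have hPcast : ∏ i ∈ Finset.Icc (k + 2) (k + l), (n i : ℝ) = (W.card : ℝ) := by
    rw [hWcard]; push_cast; ring
  have hfinal : (1 / (4 * (M : ℝ))) * ∏ i ∈ Finset.Icc (k + 1) (k + l), (n i : ℝ)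
      ≤ (T.card : ℝ) := by
    rw [hsplit, hPcast]
    have hnM : (n (k + 1) : ℝ) ≤ (M : ℝ) := by exact_mod_cast hbd (k + 1) (by omega)
    have hWT : (W.card : ℝ) ≤ 4 * (T.card : ℝ) := by exact_mod_cast key
    have hMpos : (0 : ℝ) < M := by linarith
    have hWpos : (0 : ℝ) ≤ (W.card : ℝ) := Nat.cast_nonneg _
    calc (1 / (4 * (M : ℝ))) * ((n (k + 1) : ℝ) * (W.card : ℝ))
        ≤ (1 / (4 * (M : ℝ))) * ((M : ℝ) * (W.card : ℝ)) := by
          apply mul_le_mul_of_nonneg_left (mul_le_mul_of_nonneg_right hnM hWpos)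
          positivity
      _ = (W.card : ℝ) / 4 := by field_simp
      _ ≤ (T.card : ℝ) := by linarith
  calc ENNReal.ofReal ((1 / (4 * (M : ℝ))) * ∏ i ∈ Finset.Icc (k + 1) (k + l), (n i : ℝ))
      ≤ ENNReal.ofReal (T.card : ℝ) := ENNReal.ofReal_le_ofReal hfinal
    _ = (T.card : ℝ≥0∞) := ENNReal.ofReal_natCast _
end

section
/- Let E be a homogeneous Moran set determined by a collection of closed intervals fulfilling the homogeneous Moran structure for the sequences {n_k} and {c_k}. Then for all integers k ≥ 2 and l ≥ 1, every R with δ_k < R ≤ δ_{k−1}, every r with δ_{k+l+1} < r ≤ δ_{k+l}, and every x ∈ E, N_r(B(x,R) ∩ E) ≤ 4·n_k n_{k+1}⋯n_{k+l+1}. -/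
open Metric Filter Set
open scoped ENNReal

/-!
Every point of `B(x, R) ∩ E` lies in a `(k+l+1)`-level basic interval, and since
`δ_{k+l+1} < r` that interval sits inside the `r`-ball about its left endpoint. Such an interval
is determined by its `(k-1)`-level ancestor, which meets `B(x, R)`, together with the `l + 2`
letters that follow, for which there are `n_k ⋯ n_{k+l+1}` choices. The `(k-1)`-level basic
intervals have length `δ_{k-1} ≥ R` and pairwise disjoint interiors, so at most three of them meet
`B(x, R)`.
-/

theorem coveringNumber_le_card {X : Type*} [MetricSpace X] {r : ℝ} {A : Set X} (F : Finset X)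
    (hA : A ⊆ ⋃ y ∈ F, ball y r) : coveringNumber r A ≤ F.card :=
  sInf_le ⟨F, rfl, hA⟩

/-- Points are told apart by `⌊(f i - u) / L⌋ ∈ {0, …, N - 1}`. -/
theorem Finset.card_le_of_separated_of_mem_Ioo {ι : Type*} (s : Finset ι) (f : ι → ℝ)
    {u L : ℝ} {N : ℕ} (hmem : ∀ i ∈ s, f i ∈ Set.Ioo u (u + N * L))
    (hsep : ∀ i ∈ s, ∀ j ∈ s, i ≠ j → L ≤ |f i - f j|) : s.card ≤ N := by
  rcases s.eq_empty_or_nonempty with rfl | ⟨i₀, hi₀⟩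
  · simp
  have hL : 0 < L := by
    obtain ⟨h₁, h₂⟩ := hmem i₀ hi₀
    by_contra! hL
    linarith [mul_nonpos_of_nonneg_of_nonpos (Nat.cast_nonneg (α := ℝ) N) hL]
  have hfloor : ∀ i ∈ s, 0 ≤ ⌊(f i - u) / L⌋ ∧ ⌊(f i - u) / L⌋ < N := fun i hi => by
    obtain ⟨h₁, h₂⟩ := hmem i hi
    refine ⟨Int.floor_nonneg.2 (div_nonneg (by linarith) hL.le), Int.floor_lt.2 ?_⟩
    rw [div_lt_iff₀ hL]
    push_cast
    linarith
  calc s.card ≤ (Finset.range N).card :=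
        Finset.card_le_card_of_injOn (fun i => ⌊(f i - u) / L⌋.toNat)
          (fun i hi => Finset.mem_range.2 (by have := hfloor i hi; simp only; omega))
          (fun i hi j hj hij => ?_)
    _ = N := Finset.card_range N
  by_contra hne
  have hij : ⌊(f i - u) / L⌋ = ⌊(f j - u) / L⌋ := by
    have := hfloor i hi; have := hfloor j hj; simp only at hij; omega
  have h := Int.abs_sub_lt_one_of_floor_eq_floor hij
  rw [← sub_div, sub_sub_sub_cancel_right, abs_div, abs_of_pos hL, div_lt_one hL] at h
  exact (hsep i hi j hj hne).not_gt h

theorem moranWord_append {n : ℕ → ℕ} {ρ τ : List ℕ} :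
    MoranWord n (ρ ++ τ) ↔ MoranWord n ρ ∧ MoranWord (fun i => n (ρ.length + i)) τ := by
  simp only [MoranWord, List.length_append]
  constructor
  · intro h
    refine ⟨fun j hj => ?_, fun j hj => ?_⟩
    · rw [← List.getD_append _ τ _ _ hj]
      exact h j (by omega)
    · rw [← Nat.add_sub_cancel_left (n := ρ.length) (m := j),
        ← List.getD_append_right _ _ _ _ (Nat.le_add_right _ j), Nat.add_sub_cancel_left,
        ← add_assoc]
      exact h (ρ.length + j) (by omega)
  · rintro ⟨hρ, hτ⟩ j hj
    rcases lt_or_ge j ρ.length with hj' | hj'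
    · rw [List.getD_append _ _ _ _ hj']
      exact hρ j hj'
    · obtain ⟨i, rfl⟩ := Nat.exists_eq_add_of_le hj'
      rw [List.getD_append_right _ _ _ _ hj', Nat.add_sub_cancel_left, add_assoc]
      exact hτ i (by omega)

theorem moranWord_append_singleton {n : ℕ → ℕ} {ρ : List ℕ} {i : ℕ} :
    MoranWord n (ρ ++ [i]) ↔ MoranWord n ρ ∧ 1 ≤ i ∧ i ≤ n (ρ.length + 1) := by
  rw [moranWord_append]
  simp [MoranWord]

/-- `Ω_m` as a finset. -/
def moranWords (n : ℕ → ℕ) (m : ℕ) : Finset (List ℕ) :=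
  (Fintype.piFinset fun j : Fin m => Finset.Icc 1 (n (j + 1))).image List.ofFn

theorem mem_moranWords {n : ℕ → ℕ} {m : ℕ} {σ : List ℕ} :
    σ ∈ moranWords n m ↔ MoranWord n σ ∧ σ.length = m := by
  simp only [moranWords, Finset.mem_image, Fintype.mem_piFinset, Finset.mem_Icc]
  constructor
  · rintro ⟨f, hf, rfl⟩
    refine ⟨fun j hj => ?_, List.length_ofFn⟩
    rw [List.length_ofFn] at hj
    rw [List.getD_eq_getElem _ _ (by simpa using hj), List.getElem_ofFn]
    exact hf ⟨j, hj⟩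
  · rintro ⟨hσ, rfl⟩
    refine ⟨fun j => σ[(j : ℕ)], fun j => ?_, List.ofFn_getElem⟩
    simpa only [List.getD_eq_getElem _ 0 j.2] using hσ j j.2

theorem card_moranWords_le (n : ℕ → ℕ) (m : ℕ) :
    (moranWords n m).card ≤ ∏ i ∈ Finset.Icc 1 m, n i := by
  calc (moranWords n m).card ≤ ∏ j : Fin m, (Finset.Icc 1 (n (j + 1))).card :=
        Finset.card_image_le.trans (Fintype.card_piFinset _).le
    _ = ∏ i ∈ Finset.Icc 1 m, n i := by
        simp only [Nat.card_Icc, Nat.add_sub_cancel]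
        rw [Fin.prod_univ_eq_prod_range (fun j => n (j + 1)), Finset.range_eq_Ico,
          Finset.prod_Ico_add' n, Finset.Ico_add_one_right_eq_Icc]

namespace HomMoranStructure

variable {n : ℕ → ℕ} {c : ℕ → ℝ} (S : HomMoranStructure n c)

theorem diam_I {σ : List ℕ} (hσ : MoranWord n σ) : diam (S.I σ) = moranDelta c σ.length := by
  induction σ using List.reverseRecOn with
  | nil => simp [S.root, moranDelta, Real.diam_Icc zero_le_one]
  | append_singleton ρ i ih =>
    obtain ⟨hρ, hi₁, hi₂⟩ := moranWord_append_singleton.1 hσ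
    rw [S.ratio ρ hρ i hi₁ hi₂, ih hρ, List.length_append, List.length_singleton, moranDelta,
      moranDelta, Finset.prod_Icc_succ_top (by omega), mul_comm]

theorem I_eq_Icc {σ : List ℕ} (hσ : MoranWord n σ) :
    S.I σ = Icc (sInf (S.I σ)) (sInf (S.I σ) + moranDelta c σ.length) := by
  obtain ⟨u, v, huv, hI⟩ := S.isClosedInterval σ hσ
  have hdiam := S.diam_I hσ
  rw [hI, Real.diam_Icc huv] at hdiam
  rw [hI, csInf_Icc huv, ← hdiam, add_sub_cancel]

theorem I_subset_ball_sInf {σ : List ℕ} (hσ : MoranWord n σ) {r : ℝ}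
    (hr : moranDelta c σ.length < r) : S.I σ ⊆ ball (sInf (S.I σ)) r := by
  intro z hz
  rw [S.I_eq_Icc hσ] at hz
  rw [mem_ball, Real.dist_eq, abs_lt]
  constructor <;> linarith [hz.1, hz.2]

theorem I_append_subset {ρ τ : List ℕ} (h : MoranWord n (ρ ++ τ)) : S.I (ρ ++ τ) ⊆ S.I ρ := by
  induction τ using List.reverseRecOn with
  | nil => simp
  | append_singleton τ i ih =>
    rw [← List.append_assoc] at h ⊢
    obtain ⟨h', hi₁, hi₂⟩ := moranWord_append_singleton.1 h
    exact (S.subset _ h' i hi₁ hi₂).trans (ih h')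

theorem interior_I_inter_eq_empty {σ σ' : List ℕ} (hσ : MoranWord n σ) (hσ' : MoranWord n σ')
    (hlen : σ.length = σ'.length) (hne : σ ≠ σ') :
    interior (S.I σ) ∩ interior (S.I σ') = ∅ := by
  induction σ using List.reverseRecOn generalizing σ' with
  | nil => exact absurd (List.length_eq_zero_iff.1 hlen.symm).symm hne
  | append_singleton ρ i ih =>
    obtain ⟨ρ', i', rfl⟩ : ∃ ρ' i', σ' = ρ' ++ [i'] := by
      rcases σ'.eq_nil_or_concat with rfl | ⟨ρ', i', rfl⟩
      · simp at hlen
      · exact ⟨ρ', i', List.concat_eq_append⟩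
    obtain ⟨hρ, hi₁, hi₂⟩ := moranWord_append_singleton.1 hσ
    obtain ⟨hρ', hi₁', hi₂'⟩ := moranWord_append_singleton.1 hσ'
    by_cases hρρ' : ρ = ρ'
    · subst hρρ'
      rcases (show i ≠ i' by rintro rfl; exact hne rfl).lt_or_gt with hii' | hii'
      · exact S.disj ρ hρ i i' hi₁ hii' hi₂'
      · rw [inter_comm]
        exact S.disj ρ hρ i' i hi₁' hii' hi₂
    · refine subset_empty_iff.1 ?_
      rw [← ih hρ hρ' (by simpa using hlen) hρρ']
      exact inter_subset_inter (interior_mono (S.subset ρ hρ i hi₁ hi₂))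
        (interior_mono (S.subset ρ' hρ' i' hi₁' hi₂'))

theorem le_abs_sInf_sub_sInf {σ σ' : List ℕ} (hσ : MoranWord n σ) (hσ' : MoranWord n σ')
    (hlen : σ.length = σ'.length) (hne : σ ≠ σ') :
    moranDelta c σ.length ≤ |sInf (S.I σ) - sInf (S.I σ')| := by
  have h := S.interior_I_inter_eq_empty hσ hσ' hlen hne
  rw [S.I_eq_Icc hσ, S.I_eq_Icc hσ', interior_Icc, interior_Icc, Ioo_inter_Ioo, Ioo_eq_empty_iff,
    not_lt, ← hlen] at h
  generalize sInf (S.I σ) = a, sInf (S.I σ') = a' at h ⊢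
  rcases le_total a a' with haa' | haa'
  · rw [abs_sub_comm, abs_of_nonneg (sub_nonneg.2 haa')]
    simp only [haa', sup_of_le_right, add_le_add_iff_right, inf_of_le_left] at h
    linarith
  · rw [abs_of_nonneg (sub_nonneg.2 haa')]
    simp only [haa', sup_of_le_left, add_le_add_iff_right, inf_of_le_right] at h
    linarith

open Classical in
/-- The left endpoints of the `b`-level intervals meeting `B(x, R)` lie in
`(x - R - δ_b, x + R) ⊆ (x - R - δ_b, x - R + 2δ_b)` and are `δ_b`-separated. -/
theorem card_filter_I_inter_ball_nonempty_le_three {b : ℕ} {x R : ℝ} (hR : R ≤ moranDelta c b) :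
    ((moranWords n b).filter fun η => (S.I η ∩ ball x R).Nonempty).card ≤ 3 := by
  refine Finset.card_le_of_separated_of_mem_Ioo _ (fun η => sInf (S.I η))
    (u := x - R - moranDelta c b) (L := moranDelta c b)
    (fun η hη => ?_) (fun η hη η' hη' hne => ?_)
  · obtain ⟨hη, z, hzη, hzx⟩ := Finset.mem_filter.1 hη
    obtain ⟨hηw, hηlen⟩ := mem_moranWords.1 hη
    rw [S.I_eq_Icc hηw, hηlen] at hzη
    rw [mem_ball, Real.dist_eq, abs_sub_lt_iff] at hzx
    constructor <;> push_cast <;> linarith [hzη.1, hzη.2]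
  · obtain ⟨hηw, hηlen⟩ := mem_moranWords.1 (Finset.mem_filter.1 hη).1
    obtain ⟨hηw', hηlen'⟩ := mem_moranWords.1 (Finset.mem_filter.1 hη').1
    simpa only [hηlen] using S.le_abs_sInf_sub_sInf hηw hηw' (hηlen.trans hηlen'.symm) hne

theorem exists_mem_I_of_mem_moranSet {z : ℝ} (hz : z ∈ moranSet S) (m : ℕ) :
    ∃ σ ∈ moranWords n (m + 1), z ∈ S.I σ := by
  obtain ⟨σ, hσ, hzσ⟩ := by simpa only [mem_iUnion, exists_prop] using mem_iInter.1 hz m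
  exact ⟨σ, mem_moranWords.2 hσ, hzσ⟩

open Classical in
theorem inter_moranSet_subset_biUnion (A : Set ℝ) (b t : ℕ) :
    A ∩ moranSet S ⊆ ⋃ η ∈ (moranWords n b).filter (fun η => (S.I η ∩ A).Nonempty),
      ⋃ τ ∈ moranWords (fun i => n (b + i)) (t + 1), S.I (η ++ τ) := by
  rintro z ⟨hzA, hzE⟩
  obtain ⟨σ, hσ, hzσ⟩ := S.exists_mem_I_of_mem_moranSet hzE (b + t)
  obtain ⟨hσw, hσlen⟩ := mem_moranWords.1 hσ
  rw [← List.take_append_drop b σ] at hσw hzσ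
  have hb : (σ.take b).length = b := by rw [List.length_take]; omega
  obtain ⟨hη, hτ⟩ := moranWord_append.1 hσw
  rw [hb] at hτ
  simp only [mem_iUnion, Finset.mem_filter, mem_moranWords, exists_prop]
  exact ⟨σ.take b, ⟨⟨hη, hb⟩, z, S.I_append_subset hσw hzσ, hzA⟩, σ.drop b,
    ⟨hτ, by rw [List.length_drop]; omega⟩, hzσ⟩

end HomMoranStructure

theorem homMoran_coveringNumber_upper_general (n : ℕ → ℕ) (c : ℕ → ℝ)
    (S : HomMoranStructure n c) (E : Set ℝ) (hE : E = moranSet S) :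
    ∀ k l : ℕ, 2 ≤ k → 1 ≤ l → ∀ R : ℝ, moranDelta c k < R → R ≤ moranDelta c (k - 1) →
      ∀ r : ℝ, moranDelta c (k + l + 1) < r → r ≤ moranDelta c (k + l) → ∀ x ∈ E,
        coveringNumber r (Metric.ball x R ∩ E) ≤
          ((4 * ∏ i ∈ Finset.Icc k (k + l + 1), n i : ℕ) : ℝ≥0∞) := by
  classical
  rintro k l hk - R - hR r hr - x -
  obtain ⟨b, rfl⟩ : ∃ b, k = b + 1 := ⟨k - 1, by omega⟩
  rw [show b + 1 + l + 1 = b + (l + 2) by omega] at hr ⊢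
  subst hE
  set P := (moranWords n b).filter fun η => (S.I η ∩ ball x R).Nonempty
  set T := moranWords (fun i => n (b + i)) (l + 2)
  have hcover : ball x R ∩ moranSet S ⊆
      ⋃ y ∈ (P ×ˢ T).image fun p => sInf (S.I (p.1 ++ p.2)), ball y r := by
    intro z hz
    obtain ⟨η, hη, τ, hτ, hzI⟩ := by
      simpa only [mem_iUnion, exists_prop] using S.inter_moranSet_subset_biUnion _ b (l + 1) hz
    obtain ⟨hηw, hηlen⟩ := mem_moranWords.1 (Finset.mem_filter.1 hη).1
    obtain ⟨hτw, hτlen⟩ := mem_moranWords.1 hτ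
    have hw : MoranWord n (η ++ τ) := moranWord_append.2 ⟨hηw, hηlen ▸ hτw⟩
    refine mem_biUnion (Finset.mem_image_of_mem _ (Finset.mk_mem_product hη hτ)) ?_
    exact S.I_subset_ball_sInf hw (by rwa [List.length_append, hηlen, hτlen]) hzI
  have hP : P.card ≤ 3 := S.card_filter_I_inter_ball_nonempty_le_three (by simpa using hR)
  have hT : T.card ≤ ∏ i ∈ Finset.Icc (b + 1) (b + (l + 2)), n i := by
    refine (card_moranWords_le _ _).trans_eq ?_
    rw [← Finset.map_add_left_Icc, Finset.prod_map]
    rfl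
  calc coveringNumber r (ball x R ∩ moranSet S)
      ≤ (P.card * T.card : ℕ) := (coveringNumber_le_card _ hcover).trans
        (by exact_mod_cast Finset.card_image_le.trans (Finset.card_product P T).le)
    _ ≤ ((4 * ∏ i ∈ Finset.Icc (b + 1) (b + (l + 2)), n i : ℕ) : ℝ≥0∞) := by
        gcongr
        exact hP.trans (by norm_num)

/-- For a homogeneous Moran set `E`: for `k ≥ 2`, `l ≥ 1`, `δ_k < R ≤ δ_{k-1}`,
`δ_{k+l+1} < r ≤ δ_{k+l}` and `x ∈ E`, `N_r(B(x,R) ∩ E) ≤ 4·n_k n_{k+1}⋯n_{k+l+1}`. -/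
theorem homMoran_coveringNumber_upper (n : ℕ → ℕ) (c : ℕ → ℝ)
    (hn : ∀ k, 1 ≤ k → 2 ≤ n k) (hc : ∀ k, 1 ≤ k → 0 < c k)
    (hnc : ∀ k, 1 ≤ k → (n k : ℝ) * c k < 1)
    (S : HomMoranStructure n c) (E : Set ℝ) (hE : E = moranSet S) :
    ∀ k l : ℕ, 2 ≤ k → 1 ≤ l → ∀ R : ℝ, moranDelta c k < R → R ≤ moranDelta c (k - 1) →
      ∀ r : ℝ, moranDelta c (k + l + 1) < r → r ≤ moranDelta c (k + l) → ∀ x ∈ E,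
        coveringNumber r (Metric.ball x R ∩ E) ≤
          ((4 * ∏ i ∈ Finset.Icc k (k + l + 1), n i : ℕ) : ℝ≥0∞) :=
  homMoran_coveringNumber_upper_general n c S E hE
end
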